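/- arXiv:2103.14171 — 3 statements merged into one kernel-verified Lean document; each statement's English description precedes it below -/
import Mathlib

section
/- Let Φ_x (block lower triangular with invertible diagonal blocks, in fact with identity diagonal blocks since (I−ZÂ)Φ_x − ZB̂Φ_u = I forces the diagonal blocks of Φ_x to be I) and Φ_u be block lower triangular matrices satisfying (I − ZÂ)Φ_x − ZB̂Φ_u = I. Then Φ_x is invertible, K := Φ_u Φ_x^{-1} is block lower triangular, and the closed loop with feedback u = Kx satisfies x = Φ_x w and u = Φ_u w for the dynamics x = Z(Â + B̂K)x + w. -/
/-
The achievability constraint says Φx = 1 + N with N = ZÂΦx + ZB̂Φu. Since Z shifts time down by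
one step and Â, B̂, Φx, Φu are block lower triangular, N is strictly block lower triangular, so
Φx is block lower triangular with identity diagonal blocks: det Φx = 1, and Φx⁻¹ is again block
lower triangular, hence so is K = ΦuΦx⁻¹. Because KΦx = Φu, the constraint rewrites as
(1 - Z(Â + B̂K))Φx = 1, i.e. Φx is the closed-loop map (1 - Z(Â + B̂K))⁻¹ from w to x,
and u = Kx = Φu w.
-/

open Matrix

/-- The block-downshift matrix: identity blocks on the first block sub-diagonal. -/
def Zdown (T n : ℕ) : Matrix (Fin (T+1) × Fin n) (Fin (T+1) × Fin n) ℝ :=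
  Matrix.of fun p q => if ((q.1 : ℕ) + 1 = (p.1 : ℕ) ∧ p.2 = q.2) then 1 else 0

/-- Block-diagonal repetition blkdiag(A,...,A) over the time horizon. -/
def blkdiag (T : ℕ) {a b : ℕ} (A : Matrix (Fin a) (Fin b) ℝ) :
    Matrix (Fin (T+1) × Fin a) (Fin (T+1) × Fin b) ℝ :=
  Matrix.of fun p q => if p.1 = q.1 then A p.2 q.2 else 0

/-- Block lower triangular: block (t,s) vanishes whenever t < s. -/
def BlockLT {T a b : ℕ} (M : Matrix (Fin (T+1) × Fin a) (Fin (T+1) × Fin b) ℝ) : Prop :=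
  ∀ p q, (p.1 : ℕ) < (q.1 : ℕ) → M p q = 0

open OrderDual

def StrictBlockLT {T a b : ℕ} (M : Matrix (Fin (T+1) × Fin a) (Fin (T+1) × Fin b) ℝ) : Prop :=
  ∀ p q, (p.1 : ℕ) ≤ (q.1 : ℕ) → M p q = 0

section BlockTriangular

variable {T a b c : ℕ}

theorem StrictBlockLT.blockLT {M : Matrix (Fin (T+1) × Fin a) (Fin (T+1) × Fin b) ℝ}
    (hM : StrictBlockLT M) : BlockLT M :=
  fun p q h => hM p q h.le

theorem StrictBlockLT.add {M N : Matrix (Fin (T+1) × Fin a) (Fin (T+1) × Fin b) ℝ}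
    (hM : StrictBlockLT M) (hN : StrictBlockLT N) : StrictBlockLT (M + N) := by
  intro p q h
  rw [Matrix.add_apply, hM p q h, hN p q h, add_zero]

theorem BlockLT.mul {M : Matrix (Fin (T+1) × Fin a) (Fin (T+1) × Fin b) ℝ}
    {P : Matrix (Fin (T+1) × Fin b) (Fin (T+1) × Fin c) ℝ}
    (hM : BlockLT M) (hP : BlockLT P) : BlockLT (M * P) := by
  intro p q h
  rw [mul_apply]
  refine Finset.sum_eq_zero fun j _ => ?_
  rcases lt_or_ge (p.1 : ℕ) j.1 with hj | hj
  · rw [hM p j hj, zero_mul]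
  · rw [hP j q (hj.trans_lt h), mul_zero]

theorem StrictBlockLT.mul_blockLT {M : Matrix (Fin (T+1) × Fin a) (Fin (T+1) × Fin b) ℝ}
    {P : Matrix (Fin (T+1) × Fin b) (Fin (T+1) × Fin c) ℝ}
    (hM : StrictBlockLT M) (hP : BlockLT P) : StrictBlockLT (M * P) := by
  intro p q h
  rw [mul_apply]
  refine Finset.sum_eq_zero fun j _ => ?_
  rcases lt_or_ge (j.1 : ℕ) q.1 with hj | hj
  · rw [hP j q hj, mul_zero]
  · rw [hM p j (h.trans hj), zero_mul]

theorem strictBlockLT_zdown : StrictBlockLT (Zdown T a) := by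
  intro p q h
  simp only [Zdown, of_apply, ite_eq_right_iff]
  omega

theorem blockLT_blkdiag (A : Matrix (Fin a) (Fin b) ℝ) : BlockLT (blkdiag T A) := by
  intro p q h
  simp only [blkdiag, of_apply, ite_eq_right_iff]
  exact fun hpq => absurd (congrArg Fin.val hpq) h.ne

theorem blockLT_iff_blockTriangular {M : Matrix (Fin (T+1) × Fin a) (Fin (T+1) × Fin a) ℝ} :
    BlockLT M ↔ M.BlockTriangular fun p => toDual p.1 := by
  simp only [BlockLT, BlockTriangular, toDual_lt_toDual, Fin.lt_def]

theorem StrictBlockLT.det_one_add {N : Matrix (Fin (T+1) × Fin a) (Fin (T+1) × Fin a) ℝ}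
    (hN : StrictBlockLT N) : (1 + N).det = 1 := by
  have hLT : BlockLT (1 + N) := fun p q h => by
    rw [Matrix.add_apply, hN.blockLT p q h, one_apply_ne (fun hpq => h.ne (by rw [hpq])), add_zero]
  rw [(blockLT_iff_blockTriangular.mp hLT).det]
  refine Finset.prod_eq_one fun k _ => ?_
  have hblock : (1 + N).toSquareBlock (fun p => toDual p.1) k = 1 := by
    ext i j
    have hij : (i.1.1 : ℕ) ≤ j.1.1 := by
      rw [← Fin.le_def, ← toDual_le_toDual, i.2, j.2]
    simp only [toSquareBlock_def, of_apply, Matrix.add_apply, hN _ _ hij, add_zero, one_apply,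
      Subtype.ext_iff]
  rw [hblock, det_one]

end BlockTriangular

theorem eq_mulVec_of_one_sub_mul_eq_one {m R : Type*} [Fintype m] [DecidableEq m] [CommRing R]
    {M Φ : Matrix m m R} (h : (1 - M) * Φ = 1) {x w : m → R} (hx : x = M *ᵥ x + w) :
    x = Φ *ᵥ w := by
  have hw : w = (1 - M) *ᵥ x := by
    rw [sub_mulVec, one_mulVec]
    exact (sub_eq_of_eq_add' hx).symm
  rw [hw, mulVec_mulVec, mul_eq_one_comm.mp h, one_mulVec]

theorem one_sub_closedLoop_mul_eq_one {T n p : ℕ}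
    {A : Matrix (Fin n) (Fin n) ℝ} {B : Matrix (Fin n) (Fin p) ℝ}
    {Φx : Matrix (Fin (T+1) × Fin n) (Fin (T+1) × Fin n) ℝ}
    {Φu : Matrix (Fin (T+1) × Fin p) (Fin (T+1) × Fin n) ℝ}
    {K : Matrix (Fin (T+1) × Fin p) (Fin (T+1) × Fin n) ℝ}
    (hach : (1 - Zdown T n * blkdiag T A) * Φx - Zdown T n * blkdiag T B * Φu = 1)
    (hK : K * Φx = Φu) :
    (1 - Zdown T n * (blkdiag T A + blkdiag T B * K)) * Φx = 1 := by
  calc _ = (1 - Zdown T n * blkdiag T A) * Φx - Zdown T n * blkdiag T B * (K * Φx) := by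
        simp only [mul_add, sub_mul, add_mul, Matrix.mul_assoc]
        abel
    _ = 1 := by rw [hK, hach]

theorem stmt_2 (T n p : ℕ)
    (A : Matrix (Fin n) (Fin n) ℝ) (B : Matrix (Fin n) (Fin p) ℝ)
    (Φx : Matrix (Fin (T+1) × Fin n) (Fin (T+1) × Fin n) ℝ)
    (Φu : Matrix (Fin (T+1) × Fin p) (Fin (T+1) × Fin n) ℝ)
    (hΦxLT : BlockLT Φx) (hΦuLT : BlockLT Φu)
    (hach : (1 - Zdown T n * blkdiag T A) * Φx - Zdown T n * blkdiag T B * Φu = 1) :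
    IsUnit Φx ∧ BlockLT (Φu * Φx⁻¹) ∧
      ∀ (w x : Fin (T+1) × Fin n → ℝ) (u : Fin (T+1) × Fin p → ℝ),
        x = (Zdown T n * (blkdiag T A + blkdiag T B * (Φu * Φx⁻¹))) *ᵥ x + w →
        u = (Φu * Φx⁻¹) *ᵥ x →
        x = Φx *ᵥ w ∧ u = Φu *ᵥ w := by
  have hN : StrictBlockLT (Zdown T n * blkdiag T A * Φx + Zdown T n * blkdiag T B * Φu) :=
    (strictBlockLT_zdown.mul_blockLT (blockLT_blkdiag A)).mul_blockLT hΦxLT |>.add <|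
      (strictBlockLT_zdown.mul_blockLT (blockLT_blkdiag B)).mul_blockLT hΦuLT
  have hΦx : Φx = 1 + (Zdown T n * blkdiag T A * Φx + Zdown T n * blkdiag T B * Φu) := by
    rw [← hach]
    simp only [sub_mul, one_mul]
    abel
  have hdet : IsUnit Φx.det := by
    rw [hΦx, hN.det_one_add]
    exact isUnit_one
  have hK : Φu * Φx⁻¹ * Φx = Φu := by
    rw [Matrix.mul_assoc, nonsing_inv_mul Φx hdet, Matrix.mul_one]
  have hinvLT : BlockLT Φx⁻¹ := by
    let := invertibleOfIsUnitDet Φx hdet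
    exact blockLT_iff_blockTriangular.mpr
      (blockTriangular_inv_of_blockTriangular (blockLT_iff_blockTriangular.mp hΦxLT))
  refine ⟨(isUnit_iff_isUnit_det Φx).mpr hdet, hΦuLT.mul hinvLT, fun w x u hx hu => ?_⟩
  have hxw : x = Φx *ᵥ w :=
    eq_mulVec_of_one_sub_mul_eq_one (one_sub_closedLoop_mul_eq_one hach hK) hx
  refine ⟨hxw, ?_⟩
  rw [hu, hxw, mulVec_mulVec, hK]
end

section
/- Let W₀ = {x₀} × {w : Gw ≤ g} with the second factor nonempty. Then H(Φ{1}x₀ + Φ{2:T}w) ≤ h for all w with Gw ≤ g if and only if there exists Ξ ≥ 0 with HΦ{2:T} = ΞG and HΦ{1}x₀ + Ξg ≤ h. -/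
/-!
Farkas' lemma is proved by induction on the number of generators: if `c` is not in the cone
spanned by `u, v₁, …, vₙ`, the induction hypothesis gives a functional `f` separating `c` from
the cone of the `vᵢ`; if `f u < 0`, project along `u` onto `ker f` and separate the projected
point from the projected cone. Homogenizing `Gw ≤ g` with the extra generator `(0, 1)` turns
Farkas' lemma into its affine form, where nonemptiness of `{w | Gw ≤ g}` rules out a separating
direction with zero last coordinate. The theorem is the affine form applied row by row to `HΦ₂`.
-/

open Matrix

namespace PointedCone

variable {K V : Type*} [Field K] [LinearOrder K] [IsStrictOrderedRing K]
  [AddCommGroup V] [Module K V]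

lemma nonneg_of_mem_hull {f : Module.Dual K V} {s : Set V} (hs : ∀ x ∈ s, 0 ≤ f x) {z : V}
    (hz : z ∈ hull K s) : 0 ≤ f z :=
  (Submodule.span_le (p := (positive K K).comap f)).mpr hs hz

theorem exists_dual_of_notMem_hull_range_fin {n : ℕ} (v : Fin n → V) {c : V}
    (hc : c ∉ hull K (Set.range v)) :
    ∃ f : Module.Dual K V, (∀ i, 0 ≤ f (v i)) ∧ f c < 0 := by
  induction n generalizing c with
  | zero =>
    have hc0 : c ≠ 0 := fun h => hc (h ▸ zero_mem _)
    obtain ⟨φ, hφ⟩ : ∃ φ : Module.Dual K V, φ c ≠ 0 := by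
      by_contra! h
      exact hc0 ((Module.forall_dual_apply_eq_zero_iff K c).mp h)
    rcases hφ.lt_or_gt with hφ | hφ
    · exact ⟨φ, fun i => i.elim0, hφ⟩
    · exact ⟨-φ, fun i => i.elim0, by simpa using hφ⟩
  | succ n ih =>
    induction v using Fin.consCases with
    | cons u w =>
    rw [Fin.range_cons] at hc
    obtain ⟨f, hfw, hfc⟩ := ih w fun h => hc (Submodule.span_mono (Set.subset_insert _ _) h)
    by_cases hfu : 0 ≤ f u
    · exact ⟨f, Fin.forall_fin_succ.mpr ⟨by simpa, by simpa using hfw⟩, hfc⟩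
    push Not at hfu
    set π : V →ₗ[K] V := LinearMap.id - (f u)⁻¹ • f.smulRight u with hπ
    have hπ_apply : ∀ x, π x = x - ((f u)⁻¹ * f x) • u := fun x => by
      simp [hπ, mul_smul]
    have hπu : π u = 0 := by rw [hπ_apply, inv_mul_cancel₀ hfu.ne, one_smul, sub_self]
    have hπc : π c ∉ hull K (Set.range (π ∘ w)) := by
      intro hmem
      rw [Set.range_comp] at hmem
      obtain ⟨z, hz, hπz⟩ := mem_map.mp <| show π c ∈ (hull K (Set.range w)).map π by
        rw [PointedCone.map, Submodule.map_span]; exact hmem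
      have hfz : 0 ≤ f z := nonneg_of_mem_hull (by simpa using hfw) hz
      have ha : 0 ≤ (f u)⁻¹ * (f c - f z) :=
        mul_nonneg_of_nonpos_of_nonpos (inv_nonpos.mpr hfu.le) (by linarith)
      refine hc (Submodule.mem_span_insert.mpr ⟨⟨_, ha⟩, z, hz, ?_⟩)
      rw [hπ_apply, hπ_apply] at hπz
      rw [← Nonneg.coe_smul]
      linear_combination (norm := module) -hπz
    obtain ⟨f', hf'w, hf'c⟩ := ih (π ∘ w) hπc
    exact ⟨f'.comp π, Fin.forall_fin_succ.mpr ⟨by simp [hπu], hf'w⟩, hf'c⟩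

theorem exists_dual_of_notMem_hull_range {ι : Type*} [Finite ι] (v : ι → V) {c : V}
    (hc : c ∉ hull K (Set.range v)) :
    ∃ f : Module.Dual K V, (∀ i, 0 ≤ f (v i)) ∧ f c < 0 := by
  obtain ⟨n, ⟨e⟩⟩ := Finite.exists_equiv_fin ι
  obtain ⟨f, hf, hfc⟩ :=
    exists_dual_of_notMem_hull_range_fin (v ∘ e.symm) (by rwa [EquivLike.range_comp])
  exact ⟨f, fun i => by simpa using hf (e i), hfc⟩

end PointedCone

lemma Module.Dual.apply_pi_prod {K κ : Type*} [CommSemiring K] [Fintype κ] [DecidableEq κ]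
    (f : Module.Dual K ((κ → K) × K)) (x : κ → K) (r : K) :
    f (x, r) = x ⬝ᵥ (fun j => f (Pi.single j 1, 0)) + r * f (0, 1) := by
  have : (x, r) = ∑ j, x j • ((Pi.single j 1 : κ → K), (0 : K)) + r • (0, 1) := by
    ext
    · simp [Prod.fst_sum, Finset.sum_apply, Pi.single_apply]
    · simp [Prod.snd_sum]
  rw [this, map_add, map_sum, map_smul]
  simp only [map_smul, smul_eq_mul, dotProduct]

namespace Matrix

variable {K : Type*} [Field K] [LinearOrder K] [IsStrictOrderedRing K]
  {ι κ σ : Type*} [Fintype κ]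

lemma dotProduct_le_mul_of_mulVec_le_smul {G : Matrix ι κ K} {g : ι → K}
    (hne : ∃ w, G *ᵥ w ≤ g) {c : κ → K} {β : K} (h : ∀ w, G *ᵥ w ≤ g → c ⬝ᵥ w ≤ β)
    {y : κ → K} {t : K} (ht : 0 ≤ t) (hy : G *ᵥ y ≤ t • g) : c ⬝ᵥ y ≤ t * β := by
  rcases ht.eq_or_lt with rfl | ht
  · obtain ⟨w₀, hw₀⟩ := hne
    by_contra! hcy
    rw [zero_mul] at hcy
    set s := (β - c ⬝ᵥ w₀ + 1) / c ⬝ᵥ y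
    have hs : 0 ≤ s := div_nonneg (by linarith [h w₀ hw₀]) hcy.le
    have hfeas : G *ᵥ (w₀ + s • y) ≤ g := by
      rw [mulVec_add, mulVec_smul]
      have : s • G *ᵥ y ≤ 0 := smul_nonpos_of_nonneg_of_nonpos hs (by simpa using hy)
      simpa using add_le_add hw₀ this
    have := h _ hfeas
    rw [dotProduct_add, dotProduct_smul, smul_eq_mul, div_mul_cancel₀ _ hcy.ne'] at this
    linarith
  · have hfeas : G *ᵥ (t⁻¹ • y) ≤ g := by
      rw [mulVec_smul]
      simpa [smul_smul, inv_mul_cancel₀ ht.ne'] using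
        smul_le_smul_of_nonneg_left hy (inv_nonneg.mpr ht.le)
    have := h _ hfeas
    rwa [dotProduct_smul, smul_eq_mul, inv_mul_le_iff₀ ht] at this

theorem exists_nonneg_vecMul_eq_of_forall_mulVec_le [Fintype ι] {G : Matrix ι κ K} {g : ι → K}
    (hne : ∃ w, G *ᵥ w ≤ g) {c : κ → K} {β : K} (h : ∀ w, G *ᵥ w ≤ g → c ⬝ᵥ w ≤ β) :
    ∃ ξ : ι → K, 0 ≤ ξ ∧ ξ ᵥ* G = c ∧ ξ ⬝ᵥ g ≤ β := by
  classical
  let a : Option ι → (κ → K) × K := fun o => o.elim (0, 1) fun i => (G i, g i)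
  by_cases hmem : (c, β) ∈ PointedCone.hull K (Set.range a)
  · obtain ⟨ξ, hξ⟩ := (Submodule.mem_span_range_iff_exists_fun _).mp hmem
    rw [Fintype.sum_option] at hξ
    have hfst := congrArg Prod.fst hξ
    have hsnd := congrArg Prod.snd hξ
    simp only [a, Option.elim, Prod.fst_add, Prod.snd_add, Prod.fst_sum, Prod.snd_sum,
      ← Nonneg.coe_smul, Prod.smul_fst, Prod.smul_snd, smul_zero, zero_add, smul_eq_mul,
      mul_one] at hfst hsnd
    refine ⟨fun i => ξ (some i), fun i => (ξ (some i)).2, by rw [vecMul_eq_sum]; exact hfst, ?_⟩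
    have hslack := (ξ none).2
    rw [dotProduct]
    linarith
  · obtain ⟨f, hfa, hfc⟩ := PointedCone.exists_dual_of_notMem_hull_range a hmem
    have hf := Module.Dual.apply_pi_prod f
    set z : κ → K := fun j => f (Pi.single j 1, 0)
    have ht : 0 ≤ f (0, 1) := hfa none
    have hy : G *ᵥ (-z) ≤ f (0, 1) • g := fun i => by
      have := hfa (some i)
      rw [show a (some i) = (G i, g i) from rfl, hf] at this
      rw [mulVec_neg, Pi.neg_apply, Pi.smul_apply, smul_eq_mul]
      change -(G i ⬝ᵥ z) ≤ f (0, 1) * g i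
      linarith
    have := dotProduct_le_mul_of_mulVec_le_smul hne h ht hy
    rw [dotProduct_neg] at this
    rw [hf] at hfc
    linarith

theorem forall_mulVec_le_iff_exists_nonneg [Fintype ι] {G : Matrix ι κ K} {g : ι → K}
    (hne : ∃ w, G *ᵥ w ≤ g) (A : Matrix σ κ K) (b : σ → K) :
    (∀ w, G *ᵥ w ≤ g → A *ᵥ w ≤ b) ↔
      ∃ Ξ : Matrix σ ι K, (∀ i j, 0 ≤ Ξ i j) ∧ A = Ξ * G ∧ Ξ *ᵥ g ≤ b := by
  constructor
  · intro h
    choose ξ hξ hξG hξg using fun i =>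
      exists_nonneg_vecMul_eq_of_forall_mulVec_le hne (c := A i) (β := b i) fun w hw => h w hw i
    exact ⟨Matrix.of ξ, hξ, funext fun i => (hξG i).symm, hξg⟩
  · rintro ⟨Ξ, hΞ, rfl, hΞg⟩ w hw
    rw [← mulVec_mulVec]
    exact le_trans (fun i => dotProduct_le_dotProduct_of_nonneg_left hw (hΞ i)) hΞg

end Matrix

theorem stmt_7 (m n n₀ s p : ℕ)
    (G : Matrix (Fin p) (Fin m) ℝ) (g : Fin p → ℝ)
    (hne : ∃ w : Fin m → ℝ, ∀ i, (G *ᵥ w) i ≤ g i)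
    (H : Matrix (Fin s) (Fin n) ℝ)
    (Φ₁ : Matrix (Fin n) (Fin n₀) ℝ) (Φ₂ : Matrix (Fin n) (Fin m) ℝ)
    (x₀ : Fin n₀ → ℝ) (h : Fin s → ℝ) :
    (∀ w : Fin m → ℝ, (∀ i, (G *ᵥ w) i ≤ g i) →
        ∀ i, (H *ᵥ (Φ₁ *ᵥ x₀ + Φ₂ *ᵥ w)) i ≤ h i)
    ↔ ∃ Ξ : Matrix (Fin s) (Fin p) ℝ,
        (∀ i j, 0 ≤ Ξ i j) ∧ H * Φ₂ = Ξ * G ∧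
        ∀ i, (H *ᵥ (Φ₁ *ᵥ x₀)) i + (Ξ *ᵥ g) i ≤ h i := by
  have hshift : ∀ w i, (H *ᵥ (Φ₁ *ᵥ x₀ + Φ₂ *ᵥ w)) i ≤ h i ↔
      ((H * Φ₂) *ᵥ w) i ≤ (h - H *ᵥ (Φ₁ *ᵥ x₀)) i := fun w i => by
    rw [mulVec_add, ← mulVec_mulVec, Pi.add_apply, Pi.sub_apply, le_sub_iff_add_le']
  simp only [hshift]
  exact (forall_mulVec_le_iff_exists_nonneg hne (H * Φ₂) _).trans <| exists_congr fun Ξ =>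
    and_congr_right' <| and_congr_right' <| forall_congr' fun i => le_sub_iff_add_le'
end

section
/- Suppose H = blkdiag(H₁,...,H_N) and G = blkdiag(G₁,...,G_N) are block diagonal, and Φ has block sparsity pattern S (i.e., block (i,j) of Φ is zero whenever (i,j) ∉ S). If Ξ ≥ 0 satisfies ΞG = HΦ and Ξg ≤ h, then the matrix Ξ' obtained from Ξ by zeroing out all blocks (i,j) ∉ S also satisfies Ξ' ≥ 0, Ξ'G = HΦ, and Ξ'g ≤ h, provided g ≥ 0 componentwise. -/
/-!
Because `H` and `G` are block diagonal, zeroing the blocks outside `S` commutes with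
multiplication by `H` on the left and by `G` on the right. Restricting `Ξ * G = H * Φ` to `S`
therefore gives `Ξ' * G = H * Φ`, the right-hand side being unchanged since `Φ` is supported
on `S`. Zeroing entries of a nonnegative matrix keeps it nonnegative and, against `g ≥ 0`, can
only decrease `Ξ *ᵥ g`.
-/

open Matrix

namespace Matrix

variable {ι α β γ R : Type*} (S : Set (ι × ι)) [DecidablePred (· ∈ S)]

def blockRestrict [Zero R] (M : Matrix (ι × α) (ι × β) R) : Matrix (ι × α) (ι × β) R :=
  of fun p q => if (p.1, q.1) ∈ S then M p q else 0

def IsBlockDiag [Zero R] (M : Matrix (ι × α) (ι × β) R) : Prop :=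
  ∀ p q, p.1 ≠ q.1 → M p q = 0

section Zero

variable {S} [Zero R] {M : Matrix (ι × α) (ι × β) R}

theorem blockRestrict_apply (p : ι × α) (q : ι × β) :
    blockRestrict S M p q = if (p.1, q.1) ∈ S then M p q else 0 :=
  rfl

theorem blockRestrict_apply_of_notMem {p : ι × α} {q : ι × β} (h : (p.1, q.1) ∉ S) :
    blockRestrict S M p q = 0 :=
  if_neg h

theorem blockRestrict_eq_self (hM : ∀ p q, (p.1, q.1) ∉ S → M p q = 0) :
    blockRestrict S M = M := by
  ext p q
  by_cases h : (p.1, q.1) ∈ S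
  · exact if_pos h
  · exact (if_neg h).trans (hM p q h).symm

theorem blockRestrict_nonneg [Preorder R] (hM : ∀ p q, 0 ≤ M p q) (p : ι × α) (q : ι × β) :
    0 ≤ blockRestrict S M p q := by
  rw [blockRestrict_apply]
  split_ifs
  exacts [hM p q, le_rfl]

theorem blockRestrict_le [Preorder R] (hM : ∀ p q, 0 ≤ M p q) (p : ι × α) (q : ι × β) :
    blockRestrict S M p q ≤ M p q := by
  rw [blockRestrict_apply]
  split_ifs
  exacts [le_rfl, hM p q]

end Zero

variable [Fintype ι] [Fintype β] [NonUnitalNonAssocSemiring R]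

theorem blockRestrict_mul_of_isBlockDiag {M : Matrix (ι × α) (ι × β) R}
    {G : Matrix (ι × β) (ι × γ) R} (hG : IsBlockDiag G) :
    blockRestrict S M * G = blockRestrict S (M * G) := by
  ext p q
  simp only [blockRestrict, mul_apply, of_apply, ite_mul, zero_mul]
  split_ifs with hpq
  · refine Finset.sum_congr rfl fun r _ => ?_
    by_cases hr : r.1 = q.1
    · rw [hr, if_pos hpq]
    · rw [hG r q hr, mul_zero, ite_self]
  · refine Finset.sum_eq_zero fun r _ => ?_
    by_cases hr : r.1 = q.1
    · rw [hr, if_neg hpq]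
    · rw [hG r q hr, mul_zero, ite_self]

theorem mul_blockRestrict_of_isBlockDiag {H : Matrix (ι × γ) (ι × β) R}
    {M : Matrix (ι × β) (ι × α) R} (hH : IsBlockDiag H) :
    H * blockRestrict S M = blockRestrict S (H * M) := by
  ext p q
  simp only [blockRestrict, mul_apply, of_apply, mul_ite, mul_zero]
  split_ifs with hpq
  · refine Finset.sum_congr rfl fun r _ => ?_
    by_cases hr : p.1 = r.1
    · rw [← hr, if_pos hpq]
    · rw [hH p r hr, zero_mul, ite_self]
  · refine Finset.sum_eq_zero fun r _ => ?_
    by_cases hr : p.1 = r.1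
    · rw [← hr, if_neg hpq]
    · rw [hH p r hr, zero_mul, ite_self]

end Matrix

open Classical in
theorem stmt_8 (N a b c m : ℕ) (S : Set (Fin N × Fin N))
    (H : Matrix (Fin N × Fin a) (Fin N × Fin b) ℝ)
    (G : Matrix (Fin N × Fin c) (Fin N × Fin m) ℝ)
    (hH : ∀ p q, p.1 ≠ q.1 → H p q = 0)
    (hG : ∀ p q, p.1 ≠ q.1 → G p q = 0)
    (Φ : Matrix (Fin N × Fin b) (Fin N × Fin m) ℝ)
    (hΦ : ∀ p q, (p.1, q.1) ∉ S → Φ p q = 0)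
    (g : Fin N × Fin c → ℝ) (h : Fin N × Fin a → ℝ)
    (hg : ∀ i, 0 ≤ g i)
    (Ξ : Matrix (Fin N × Fin a) (Fin N × Fin c) ℝ)
    (hΞpos : ∀ p q, 0 ≤ Ξ p q)
    (hΞG : Ξ * G = H * Φ)
    (hΞg : ∀ i, (Ξ *ᵥ g) i ≤ h i) :
    let Ξ' : Matrix (Fin N × Fin a) (Fin N × Fin c) ℝ :=
      Matrix.of fun p q => if (p.1, q.1) ∈ S then Ξ p q else 0
    (∀ p q, 0 ≤ Ξ' p q) ∧ Ξ' * G = H * Φ ∧ (∀ i, (Ξ' *ᵥ g) i ≤ h i) ∧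
      (∀ p q, (p.1, q.1) ∉ S → Ξ' p q = 0) := by
  show (∀ p q, 0 ≤ blockRestrict S Ξ p q) ∧ blockRestrict S Ξ * G = H * Φ ∧
    (∀ i, (blockRestrict S Ξ *ᵥ g) i ≤ h i) ∧
    (∀ p q, (p.1, q.1) ∉ S → blockRestrict S Ξ p q = 0)
  refine ⟨blockRestrict_nonneg hΞpos, ?_, fun i => ?_, fun p q => blockRestrict_apply_of_notMem⟩
  · rw [blockRestrict_mul_of_isBlockDiag S hG, hΞG, ← mul_blockRestrict_of_isBlockDiag S hH,
      blockRestrict_eq_self hΦ]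
  · refine le_trans (Finset.sum_le_sum fun r _ => ?_) (hΞg i)
    exact mul_le_mul_of_nonneg_right (blockRestrict_le hΞpos i r) (hg r)
end
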